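/- For every integer d ≥ 1, every ε ∈ (0,1), and every n ∈ ℤ⁺ with ε^{-d} ≤ c·n for a suitable constant c, there exists an n-point ultrametric space (X, d_X) of doubling dimension at most d such that every (1+ε)-spanner of X has Ω(n·ε^{-d}) edges. -/

import Mathlib

/-- The weight of a path (list of vertices): the sum of the weights of its
consecutive pairs, where the weight of a pair is its metric distance. -/
def pathWeight {X : Type*} (dX : X → X → ℝ) : List X → ℝ
  | [] => 0
  | [_] => 0
  | a :: b :: l => dX a b + pathWeight dX (b :: l)

/-- `G = (X,E)` (edge weights = distances) is a `t`-spanner of `(X,dX)`: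
every pair is joined by a path in `G` of weight at most `t` times its distance. -/
def IsSpanner {X : Type*} (dX : X → X → ℝ) (E : X → X → Prop) (t : ℝ) : Prop :=
  ∀ u v : X, ∃ p : List X, p.Chain' E ∧ p.head? = some u ∧ p.getLast? = some v ∧
    pathWeight dX p ≤ t * dX u v

/-!
The witness is the tree ultrametric on `{0, …, n-1}`: two distinct points whose lowest common
ancestor in the complete `2^d`-ary tree of base-`2^d` expansions has height `k` are at distance
`2^k`. A ball lies in one block of the tree, which is covered by its `2^d` sub-blocks of half
the diameter. All distances are at least `2`,
and in an ultrametric a path through a third point weighs at least the direct distance plus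
one further edge; so if `ε · 2^l < 2`, every pair in a common block of `(2^d)^l ≥ ε^{-d}`
points is an edge of every `(1+ε)`-spanner, which gives about `n · ε^{-d} / 4` edges.
-/

section Paths

variable {X : Type*} {dX : X → X → ℝ}

@[simp]
lemma pathWeight_cons_cons (a b : X) (l : List X) :
    pathWeight dX (a :: b :: l) = dX a b + pathWeight dX (b :: l) := rfl

lemma pathWeight_nonneg (hnn : ∀ u v, 0 ≤ dX u v) : ∀ p : List X, 0 ≤ pathWeight dX p
  | [] | [_] => le_rfl
  | a :: b :: l => add_nonneg (hnn a b) (pathWeight_nonneg hnn (b :: l))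

lemma le_pathWeight_of_getLast? (htri : ∀ u v w, dX u w ≤ dX u v + dX v w) :
    ∀ (a b : X) (l : List X) (v : X), (a :: b :: l).getLast? = some v →
      dX a v ≤ pathWeight dX (a :: b :: l)
  | a, b, [], v, h => by
    obtain rfl : b = v := by simpa using h
    simp [pathWeight]
  | a, b, c :: l, v, h => by
    have ih := le_pathWeight_of_getLast? htri b c l v (by simpa using h)
    rw [pathWeight_cons_cons]
    linarith [htri a b v]

theorem IsSpanner.rel_of_mul_lt {E : X → X → Prop} {ε δ : ℝ}
    (hspan : IsSpanner dX E (1 + ε)) (hnn : ∀ u v, 0 ≤ dX u v)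
    (hult : ∀ u v w, dX u w ≤ max (dX u v) (dX v w))
    (hE : ∀ a b, E a b → δ ≤ dX a b) {u v : X} (huv : u ≠ v) (hlt : ε * dX u v < δ) :
    E u v := by
  have htri : ∀ u v w, dX u w ≤ dX u v + dX v w := fun u v w =>
    (hult u v w).trans (max_le_add_of_nonneg (hnn u v) (hnn v w))
  obtain ⟨p, hchain, hhead, hlast, hweight⟩ := hspan u v
  match p, hchain, hhead, hlast, hweight with
  | [], _, hhead, _, _ => simp at hhead
  | [a], _, hhead, hlast, _ =>
    simp only [List.head?_cons, List.getLast?_singleton, Option.some.injEq] at hhead hlast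
    exact absurd (hhead.symm.trans hlast) huv
  | [a, b], hchain, hhead, hlast, _ =>
    simp only [List.head?_cons, List.getLast?_cons_cons, List.getLast?_singleton,
      Option.some.injEq] at hhead hlast
    subst hhead hlast
    exact List.isChain_pair.mp hchain
  | a :: b :: c :: l, hchain, hhead, hlast, hweight =>
    obtain rfl : a = u := by simpa using hhead
    rw [List.getLast?_cons_cons] at hlast
    obtain ⟨hab, hbc, -⟩ :=
      List.isChain_cons_cons.mp hchain |>.imp_right List.isChain_cons_cons.mp
    have hrest : δ ≤ pathWeight dX (b :: c :: l) := by
      rw [pathWeight_cons_cons]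
      linarith [hE b c hbc, pathWeight_nonneg hnn (c :: l)]
    have hbv := le_pathWeight_of_getLast? htri b c l v hlast
    rw [pathWeight_cons_cons] at hweight
    rcases le_total (dX a b) (dX b v) with h | h
    · linarith [max_eq_right h ▸ hult a b v, hE a b hab]
    · linarith [max_eq_left h ▸ hult a b v, hE a b hab]

end Paths

section TreeUltrametric

/-- The least `k` such that `i` and `j` lie in the same block `[q * B ^ k, (q + 1) * B ^ k)`,
i.e. the height of their lowest common ancestor in the complete `B`-ary tree on `ℕ`. -/
noncomputable def blockLevel (B i j : ℕ) : ℕ := sInf {k | i / B ^ k = j / B ^ k}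

variable {B : ℕ}

lemma div_pow_eq_of_le {i j s t : ℕ} (h : i / B ^ s = j / B ^ s) (hst : s ≤ t) :
    i / B ^ t = j / B ^ t := by
  rw [← Nat.add_sub_cancel' hst, pow_add, ← Nat.div_div_eq_div_mul, h, Nat.div_div_eq_div_mul]

lemma blockLevel_le_iff (hB : 1 < B) {i j t : ℕ} :
    blockLevel B i j ≤ t ↔ i / B ^ t = j / B ^ t := by
  refine ⟨fun h => div_pow_eq_of_le (Nat.sInf_mem (s := {k | i / B ^ k = j / B ^ k}) ?_) h,
    fun h => Nat.sInf_le h⟩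
  refine ⟨i + j, ?_⟩
  have hlt := Nat.lt_pow_self (n := i + j) hB
  change i / _ = j / _
  rw [Nat.div_eq_of_lt (show i < B ^ (i + j) by omega),
    Nat.div_eq_of_lt (show j < B ^ (i + j) by omega)]

lemma blockLevel_eq_zero_iff (hB : 1 < B) {i j : ℕ} : blockLevel B i j = 0 ↔ i = j := by
  simpa using blockLevel_le_iff hB (i := i) (j := j) (t := 0)

lemma blockLevel_comm (i j : ℕ) : blockLevel B i j = blockLevel B j i := by
  simp only [blockLevel, eq_comm]

lemma blockLevel_le_max (hB : 1 < B) (i j k : ℕ) :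
    blockLevel B i k ≤ max (blockLevel B i j) (blockLevel B j k) := by
  rw [blockLevel_le_iff hB]
  exact (blockLevel_le_iff hB).mp (le_max_left _ _) |>.trans
    ((blockLevel_le_iff hB).mp (le_max_right _ _))

def levelScale : ℕ → ℝ
  | 0 => 0
  | k + 1 => 2 ^ (k + 1)

lemma levelScale_nonneg (k : ℕ) : 0 ≤ levelScale k := by
  cases k <;> simp [levelScale]

lemma levelScale_eq_zero_iff {k : ℕ} : levelScale k = 0 ↔ k = 0 := by
  cases k <;> simp [levelScale]

lemma levelScale_le_two_pow (k : ℕ) : levelScale k ≤ 2 ^ k := by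
  cases k <;> simp [levelScale]

lemma two_le_levelScale {k : ℕ} (hk : k ≠ 0) : 2 ≤ levelScale k := by
  obtain ⟨k, rfl⟩ := Nat.exists_eq_succ_of_ne_zero hk
  exact le_self_pow₀ one_le_two k.succ_ne_zero

lemma levelScale_mono : Monotone levelScale := by
  refine monotone_nat_of_le_succ fun k => ?_
  cases k with
  | zero => simp [levelScale]
  | succ k => simp only [levelScale]; gcongr <;> norm_num

lemma levelScale_pred_le_half (k : ℕ) : levelScale (k - 1) ≤ levelScale k / 2 := by
  rcases k with _ | _ | k
  · simp [levelScale]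
  · simp [levelScale]
  · simp only [levelScale, Nat.add_sub_cancel]
    rw [pow_succ _ (k + 1)]; linarith

noncomputable def treeDist (B i j : ℕ) : ℝ := levelScale (blockLevel B i j)

lemma treeDist_nonneg (i j : ℕ) : 0 ≤ treeDist B i j := levelScale_nonneg _

lemma treeDist_eq_zero_iff (hB : 1 < B) {i j : ℕ} : treeDist B i j = 0 ↔ i = j := by
  rw [treeDist, levelScale_eq_zero_iff, blockLevel_eq_zero_iff hB]

lemma treeDist_comm (i j : ℕ) : treeDist B i j = treeDist B j i := by
  rw [treeDist, blockLevel_comm]; rfl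

lemma treeDist_le_max (hB : 1 < B) (i j k : ℕ) :
    treeDist B i k ≤ max (treeDist B i j) (treeDist B j k) :=
  (levelScale_mono (blockLevel_le_max hB i j k)).trans_eq (levelScale_mono.map_max)

lemma two_le_treeDist (hB : 1 < B) {i j : ℕ} (hij : i ≠ j) : 2 ≤ treeDist B i j :=
  two_le_levelScale fun h => hij ((blockLevel_eq_zero_iff hB).mp h)

lemma treeDist_le_of_div_pow_eq (hB : 1 < B) {i j t : ℕ} (h : i / B ^ t = j / B ^ t) :
    treeDist B i j ≤ levelScale t :=
  levelScale_mono ((blockLevel_le_iff hB).mpr h)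

lemma card_image_div_pow_pred_le {α : Type*} (hB : 0 < B) (A : Finset α) (g : α → ℕ)
    {q t : ℕ} (hA : ∀ y ∈ A, g y / B ^ t = q) :
    (A.image fun y => g y / B ^ (t - 1)).card ≤ B := by
  cases t with
  | zero =>
    refine (Finset.card_le_one.mpr ?_).trans hB
    simp only [Finset.mem_image]
    rintro _ ⟨y, hy, rfl⟩ _ ⟨z, hz, rfl⟩
    simpa using (hA y hy).trans (hA z hz).symm
  | succ t =>
    refine (Finset.card_le_card (t := Finset.Ico (q * B) (q * B + B)) ?_).trans (by simp)
    simp only [Finset.subset_iff, Finset.mem_image, Finset.mem_Ico]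
    rintro _ ⟨y, hy, rfl⟩
    have hq : g y / B ^ t / B = q := by rw [Nat.div_div_eq_div_mul, ← pow_succ, hA y hy]
    have hdm := Nat.div_add_mod (g y / B ^ t) B
    have hmod := Nat.mod_lt (g y / B ^ t) hB
    rw [hq, mul_comm] at hdm
    simp only [Nat.add_sub_cancel]
    omega

theorem treeDist_doubling (hB : 1 < B) {n : ℕ} (x : Fin n) (r : ℝ) :
    ∃ s : Finset (Fin n), s.card ≤ B ∧
      ∀ y : Fin n, treeDist B x y ≤ r → ∃ c ∈ s, treeDist B c y ≤ r / 2 := by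
  classical
  have : Nonempty (Fin n) := ⟨x⟩
  set ball := Finset.univ.filter fun y : Fin n => treeDist B x y ≤ r
  set t := ball.sup fun y => blockLevel B x y
  have hblock : ∀ y ∈ ball, (y : ℕ) / B ^ t = x / B ^ t := fun y hy =>
    ((blockLevel_le_iff hB).mp (Finset.le_sup (f := fun y : Fin n => blockLevel B x y) hy)).symm
  set φ : Fin n → ℕ := fun y => y / B ^ (t - 1)
  refine ⟨(ball.image φ).image (Function.invFunOn φ (ball : Set (Fin n))),
    Finset.card_image_le.trans (card_image_div_pow_pred_le (by omega) ball _ hblock), ?_⟩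
  intro y hy
  have hyb : y ∈ ball := Finset.mem_filter.mpr ⟨Finset.mem_univ y, hy⟩
  have hex : ∃ a ∈ (ball : Set (Fin n)), φ a = φ y := ⟨y, hyb, rfl⟩
  set c := Function.invFunOn φ (ball : Set (Fin n)) (φ y)
  refine ⟨c, Finset.mem_image_of_mem _ (Finset.mem_image_of_mem φ hyb), ?_⟩
  have hr : levelScale t ≤ r := by
    obtain ⟨z, hz, hzt⟩ := ball.exists_mem_eq_sup ⟨y, hyb⟩ fun y => blockLevel B x y
    rw [show t = _ from hzt]
    exact (Finset.mem_filter.mp hz).2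
  calc treeDist B c y ≤ levelScale (t - 1) :=
        treeDist_le_of_div_pow_eq hB (Function.invFunOn_eq hex)
    _ ≤ levelScale t / 2 := levelScale_pred_le_half t
    _ ≤ r / 2 := by linarith

end TreeUltrametric

lemma injOn_mul_add_pair (N : ℕ) :
    Set.InjOn (fun x : ℕ × ℕ × ℕ => (N * x.1 + x.2.1, N * x.1 + x.2.2))
      {x | x.2.1 < N ∧ x.2.2 < N} := by
  rintro ⟨q, a, b⟩ ⟨ha, hb⟩ ⟨q', a', b'⟩ ⟨ha', -⟩ h
  simp only [Prod.mk.injEq] at h ha hb ha' ⊢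
  have hq : q = q' := by
    simpa [Nat.mul_add_div (ha.trans_le' (Nat.zero_le _) |>.pos), Nat.div_eq_of_lt ha,
      Nat.div_eq_of_lt ha'] using congrArg (· / N) h.1
  subst hq
  omega

lemma card_sameBlock_offDiag_ge (n N : ℕ) :
    n / N * (N * N - N) ≤
      {p : Fin n × Fin n | p.1 ≠ p.2 ∧ (p.1 : ℕ) / N = (p.2 : ℕ) / N}.ncard := by
  set S := {p : Fin n × Fin n | p.1 ≠ p.2 ∧ (p.1 : ℕ) / N = (p.2 : ℕ) / N}
  set D := Finset.range (n / N) ×ˢ (Finset.range N).offDiag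
  set f : ℕ × ℕ × ℕ → ℕ × ℕ := fun x => (N * x.1 + x.2.1, N * x.1 + x.2.2)
  have hinj : Set.InjOn f D := (injOn_mul_add_pair N).mono fun x hx => by
    simp only [D, Finset.coe_product, Set.mem_prod, Finset.coe_offDiag, Set.mem_offDiag,
      Finset.coe_range, Set.mem_Iio] at hx
    exact ⟨hx.2.1, hx.2.2.1⟩
  have hmaps : ↑(D.image f) ⊆ Prod.map Fin.val Fin.val '' S := by
    intro z hz
    obtain ⟨⟨q, a, b⟩, hx, rfl⟩ := Finset.mem_image.mp hz
    simp only [D, Finset.mem_product, Finset.mem_offDiag, Finset.mem_range] at hx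
    obtain ⟨hq, ha, hb, hab⟩ := hx
    have hlt : ∀ {c}, c < N → N * q + c < n := fun hc => by nlinarith [Nat.mul_div_le n N]
    have hdiv : ∀ {c}, c < N → (N * q + c) / N = q := fun hc => by
      rw [Nat.mul_add_div (by omega), Nat.div_eq_of_lt hc, add_zero]
    refine ⟨(⟨N * q + a, hlt ha⟩, ⟨N * q + b, hlt hb⟩), ⟨?_, ?_⟩, rfl⟩
    · simpa [Fin.ext_iff] using hab
    · simp only [hdiv ha, hdiv hb]
  calc n / N * (N * N - N) = (D.image f).card := by
        rw [Finset.card_image_of_injOn hinj, Finset.card_product, Finset.offDiag_card,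
          Finset.card_range, Finset.card_range]
    _ = (↑(D.image f) : Set (ℕ × ℕ)).ncard := (Set.ncard_coe_finset _).symm
    _ ≤ (Prod.map Fin.val Fin.val '' S).ncard := Set.ncard_le_ncard hmaps (Set.toFinite _)
    _ = S.ncard :=
        Set.ncard_image_of_injective S (Fin.val_injective.prodMap Fin.val_injective)

lemma mul_le_four_mul_div_mul_sub {n N : ℕ} (hN : 2 ≤ N) (hNn : N ≤ n) :
    n * N ≤ 4 * (n / N * (N * N - N)) := by
  have hK : 1 ≤ n / N := Nat.div_pos hNn (by omega)
  have hn : n < N * (n / N + 1) := Nat.lt_mul_div_succ n (by omega)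
  obtain ⟨M, rfl⟩ : ∃ M, N = M + 1 := ⟨N - 1, by omega⟩
  have hsub : (M + 1) * (M + 1) - (M + 1) = (M + 1) * M := by
    rw [Nat.mul_succ]; omega
  rw [hsub]
  nlinarith

lemma mul_div_four_le_ncard_sameBlock_offDiag {n N : ℕ} (hN : 2 ≤ N) (hNn : N ≤ n) :
    (n * N : ℝ) / 4 ≤
      {p : Fin n × Fin n | p.1 ≠ p.2 ∧ (p.1 : ℕ) / N = (p.2 : ℕ) / N}.ncard := by
  have h := (Nat.cast_le (α := ℝ)).mpr <| (mul_le_four_mul_div_mul_sub hN hNn).trans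
    (Nat.mul_le_mul_left 4 (card_sameBlock_offDiag_ge n N))
  rw [Nat.cast_mul, Nat.cast_mul (4 : ℕ), Nat.cast_ofNat] at h
  linarith

lemma sameBlock_subset_of_isSpanner_treeDist {B n l : ℕ} (hB : 1 < B) {ε : ℝ} (hε : 0 ≤ ε)
    (hεl : ε * 2 ^ l < 2) {E : Fin n → Fin n → Prop} (hirr : ∀ x, ¬ E x x)
    (hspan : IsSpanner (fun u v : Fin n => treeDist B u v) E (1 + ε)) :
    {p : Fin n × Fin n | p.1 ≠ p.2 ∧ (p.1 : ℕ) / B ^ l = (p.2 : ℕ) / B ^ l} ⊆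
      {q | E q.1 q.2} := by
  rintro ⟨u, v⟩ ⟨huv, hblock⟩
  refine hspan.rel_of_mul_lt (δ := 2) (fun _ _ => treeDist_nonneg _ _)
    (fun _ _ _ => treeDist_le_max hB _ _ _)
    (fun a b hab => two_le_treeDist hB (Fin.val_ne_of_ne fun h => hirr a (h ▸ hab))) huv ?_
  calc ε * treeDist B u v ≤ ε * 2 ^ l := by
        gcongr; exact (treeDist_le_of_div_pow_eq hB hblock).trans (levelScale_le_two_pow l)
    _ < 2 := hεl

lemma exists_two_pow_bracket {ε : ℝ} (hε0 : 0 < ε) (hε2 : ε < 2) :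
    ∃ l : ℕ, ε⁻¹ ≤ 2 ^ l ∧ ε * 2 ^ l < 2 := by
  classical
  have hex : ∃ l : ℕ, ε⁻¹ ≤ 2 ^ l :=
    (pow_unbounded_of_one_lt ε⁻¹ one_lt_two).imp fun _ => le_of_lt
  refine ⟨Nat.find hex, Nat.find_spec hex, ?_⟩
  rcases Nat.eq_zero_or_eq_succ_pred (Nat.find hex) with h | h
  · rw [h]; simpa using hε2
  · have hmin : ε * 2 ^ (Nat.find hex - 1) < 1 := by
      have := mul_lt_mul_of_pos_left (not_le.mp (Nat.find_min hex (Nat.pred_lt_self (by omega))))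
        hε0
      rwa [mul_inv_cancel₀ hε0.ne'] at this
    rw [h, pow_succ, Nat.pred_eq_sub_one]
    linarith

lemma exists_block_exponent {ε : ℝ} (hε0 : 0 < ε) (hε2 : ε < 2) (d : ℕ) :
    ∃ l : ℕ, ε * 2 ^ l < 2 ∧ ε⁻¹ ^ d ≤ ((2 ^ d) ^ l : ℕ) ∧
      (((2 ^ d) ^ l : ℕ) : ℝ) ≤ 2 ^ d * ε⁻¹ ^ d := by
  obtain ⟨l, hl, hεl⟩ := exists_two_pow_bracket hε0 hε2
  have hcast : (((2 ^ d) ^ l : ℕ) : ℝ) = (2 ^ l) ^ d := by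
    push_cast; rw [← pow_mul, ← pow_mul, mul_comm]
  refine ⟨l, hεl, hcast ▸ pow_le_pow_left₀ (by positivity) hl d, ?_⟩
  rw [hcast, ← mul_pow]
  gcongr
  rw [← div_eq_mul_inv, le_div_iff₀' hε0]
  exact hεl.le

/-- for every `d ≥ 1` there are constants `c₁, c₂ > 0` such that for
every `ε ∈ (0,1)` and every `n` with `ε⁻¹^d ≤ c₁·n`, there is an `n`-point
ultrametric space of doubling dimension at most `d` on which every
`(1+ε)`-spanner has at least `c₂·n·ε⁻¹^d` (ordered) edges. -/
theorem stmt8 (d : ℕ) (hd : 1 ≤ d) :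
    ∃ c₁ c₂ : ℝ, 0 < c₁ ∧ 0 < c₂ ∧
    ∀ ε : ℝ, 0 < ε → ε < 1 → ∀ n : ℕ, 0 < n → ε⁻¹ ^ d ≤ c₁ * n →
    ∃ dX : Fin n → Fin n → ℝ,
      (∀ u v, 0 ≤ dX u v) ∧
      (∀ u v, dX u v = 0 ↔ u = v) ∧
      (∀ u v, dX u v = dX v u) ∧
      (∀ u v w, dX u w ≤ max (dX u v) (dX v w)) ∧
      (∀ (x : Fin n) (r : ℝ), ∃ s : Finset (Fin n), s.card ≤ 2 ^ d ∧
        ∀ y, dX x y ≤ r → ∃ c ∈ s, dX c y ≤ r / 2) ∧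
      (∀ E : Fin n → Fin n → Prop, Symmetric E → (∀ x, ¬ E x x) →
        IsSpanner dX E (1 + ε) →
        c₂ * n * ε⁻¹ ^ d ≤ (Set.ncard {q : Fin n × Fin n | E q.1 q.2} : ℝ)) := by
  refine ⟨1 / 2 ^ d, 1 / 4, by positivity, by norm_num, fun ε hε0 hε1 n _ hεn => ?_⟩
  have hB : 1 < 2 ^ d := Nat.one_lt_two_pow (by omega)
  obtain ⟨l, hεl, hlow, hup⟩ := exists_block_exponent hε0 (by linarith) d
  have hN2 : 2 ≤ (2 ^ d) ^ l := by
    have : (1 : ℝ) < ((2 ^ d) ^ l : ℕ) :=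
      (one_lt_pow₀ ((one_lt_inv₀ hε0).mpr hε1) (by omega)).trans_le hlow
    exact_mod_cast this
  have hNn : (2 ^ d) ^ l ≤ n := by
    have : (((2 ^ d) ^ l : ℕ) : ℝ) ≤ n := by
      rw [one_div, inv_mul_eq_div, le_div_iff₀' (by positivity)] at hεn
      linarith
    exact_mod_cast this
  refine ⟨fun u v => treeDist (2 ^ d) u v, fun _ _ => treeDist_nonneg _ _,
    fun _ _ => (treeDist_eq_zero_iff hB).trans Fin.val_inj, fun _ _ => treeDist_comm _ _,
    fun _ _ _ => treeDist_le_max hB _ _ _, fun x r => treeDist_doubling hB x r, ?_⟩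
  intro E _ hirr hspan
  calc 1 / 4 * n * ε⁻¹ ^ d ≤ (n * ((2 ^ d) ^ l : ℕ) : ℝ) / 4 := by
        rw [div_mul_eq_mul_div, one_mul, mul_div_right_comm]
        gcongr
    _ ≤ _ := mul_div_four_le_ncard_sameBlock_offDiag hN2 hNn
    _ ≤ _ := Nat.cast_le.mpr <| Set.ncard_le_ncard <| by
        exact sameBlock_subset_of_isSpanner_treeDist hB hε0.le hεl hirr hspan
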